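/- Under the hypotheses of Theorem 4 (margin condition with parameter γ, Hausdorff estimation error ε_n for each set M_ℓ ≈ Ĥ_α(f_ℓ)), define the trust score ξ(h,x) = d(x, M̂_{h̃(x)})/d(x, M̂_{h(x)}) where h̃(x) is the nearest other class. If ξ(h,x) < 1 − γ − (ε_n/(d(x,M_{h(x)}) + ε_n))·(d(x,M_{h̃(x)})/d(x,M_{h(x)}) + 1), then d(x, M_{h̃(x)})/d(x, M_{h(x)}) < 1 − γ and hence h(x) ≠ h*(x). -/

import Mathlib

open Metric Set

/-!
Passing from the estimated sets to the true ones moves each distance by at most `ε`, so the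
trust score is at least `(b - ε) / (a + ε)`, where `a`, `b` are the true distances to the sets of
`h x` and `h̃ x`. The correction term of the hypothesis is exactly what turns this lower bound into
the true ratio: `(b - ε) / (a + ε) + ε / (a + ε) * (b / a + 1) = b / a`. Hence `b / a < 1 - γ`, and
the margin condition makes `h̃ x` strictly more likely than `h x`, which is then not Bayes-optimal.
-/

theorem Metric.infDist_le_infDist_add_of_hausdorffDist_le {X : Type*} [PseudoMetricSpace X]
    {s t : Set X} {ε : ℝ} (x : X) (fin : hausdorffEDist s t ≠ ⊤)
    (hst : hausdorffDist s t ≤ ε) : infDist x t ≤ infDist x s + ε :=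
  (infDist_le_infDist_add_hausdorffDist fin).trans (by gcongr)

theorem sub_div_add_le_div_of_le_add {a b a' b' ε : ℝ} (ha : 0 < a + ε) (ha' : 0 < a')
    (hb' : 0 ≤ b') (hb : b ≤ b' + ε) (ha'a : a' ≤ a + ε) : (b - ε) / (a + ε) ≤ b' / a' := by
  rcases le_or_gt (b - ε) 0 with hneg | hpos
  · exact (div_nonpos_of_nonpos_of_nonneg hneg ha.le).trans (div_nonneg hb' ha'.le)
  · calc (b - ε) / (a + ε) ≤ b' / (a + ε) := by gcongr; linarith
      _ ≤ b' / a' := div_le_div_of_nonneg_left hb' ha' ha'a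

theorem sub_div_add_add_div_mul_div_add_one {a b ε : ℝ} (ha : a ≠ 0) (haε : a + ε ≠ 0) :
    (b - ε) / (a + ε) + ε / (a + ε) * (b / a + 1) = b / a := by
  field_simp
  ring

theorem low_trust_score_implies_disagreement_general
    (D L : ℕ)
    (M Mhat : Fin L → Set (EuclideanSpace ℝ (Fin D)))
    (εn : ℝ) (hεn : 0 ≤ εn)
    (hedist : ∀ ℓ, EMetric.hausdorffEdist (M ℓ) (Mhat ℓ) ≠ ⊤)
    (hhaus : ∀ ℓ, hausdorffDist (M ℓ) (Mhat ℓ) ≤ εn)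
    (γ : ℝ)
    (P : EuclideanSpace ℝ (Fin D) → Fin L → ℝ)
    (hmargin : ∀ x, ∀ i j : Fin L, i ≠ j →
        infDist x (M i) / infDist x (M j) < 1 - γ → P x j < P x i)
    (hstar : EuclideanSpace ℝ (Fin D) → Fin L)
    (hstar_opt : ∀ x ℓ, P x ℓ ≤ P x (hstar x))
    (h htilde : EuclideanSpace ℝ (Fin D) → Fin L)
    (htilde_ne : ∀ x, htilde x ≠ h x)
    (ξ : EuclideanSpace ℝ (Fin D) → ℝ)
    (hξ : ∀ x, ξ x = infDist x (Mhat (htilde x)) / infDist x (Mhat (h x)))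
    (x : EuclideanSpace ℝ (Fin D))
    (ha : 0 < infDist x (M (h x)))
    (hahat : 0 < infDist x (Mhat (h x)))
    (hlow : ξ x < 1 - γ - (εn / (infDist x (M (h x)) + εn)) *
        (infDist x (M (htilde x)) / infDist x (M (h x)) + 1)) :
    infDist x (M (htilde x)) / infDist x (M (h x)) < 1 - γ ∧ h x ≠ hstar x := by
  have hεpos : 0 < infDist x (M (h x)) + εn := by linarith
  have hhaus_symm : ∀ ℓ, hausdorffDist (Mhat ℓ) (M ℓ) ≤ εn := fun ℓ ↦
    hausdorffDist_comm (s := M ℓ) ▸ hhaus ℓ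
  have hedist_symm : ∀ ℓ, hausdorffEDist (Mhat ℓ) (M ℓ) ≠ ⊤ := fun ℓ ↦
    hausdorffEDist_comm (s := M ℓ) ▸ hedist ℓ
  have hξ_ge : (infDist x (M (htilde x)) - εn) / (infDist x (M (h x)) + εn) ≤ ξ x :=
    hξ x ▸ sub_div_add_le_div_of_le_add hεpos hahat infDist_nonneg
      (infDist_le_infDist_add_of_hausdorffDist_le x (hedist_symm _) (hhaus_symm _))
      (infDist_le_infDist_add_of_hausdorffDist_le x (hedist _) (hhaus _))
  have hratio : infDist x (M (htilde x)) / infDist x (M (h x)) < 1 - γ := by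
    rw [← sub_div_add_add_div_mul_div_add_one ha.ne' hεpos.ne']
    linarith
  refine ⟨hratio, fun hbayes ↦ ?_⟩
  have hmore_likely := hmargin x (htilde x) (h x) (htilde_ne x) hratio
  have hopt := hstar_opt x (htilde x)
  rw [← hbayes] at hopt
  linarith

/-- 'low trust score implies disagreement with Bayes-optimal':
with M_ℓ the true high-density sets and M̂_ℓ their estimates with Hausdorff error
ε_n, if the trust score ξ(h,x) = d(x,M̂_{h̃(x)})/d(x,M̂_{h(x)}) satisfies
ξ(h,x) < 1 − γ − (ε_n/(d(x,M_{h(x)})+ε_n))·(d(x,M_{h̃(x)})/d(x,M_{h(x)}) + 1),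
then d(x,M_{h̃(x)})/d(x,M_{h(x)}) < 1 − γ and h(x) ≠ h*(x). -/
theorem low_trust_score_implies_disagreement
    (D L : ℕ) (hL : 0 < L)
    (M Mhat : Fin L → Set (EuclideanSpace ℝ (Fin D)))
    (hM : ∀ ℓ, (M ℓ).Nonempty ∧ IsCompact (M ℓ))
    (hMhat : ∀ ℓ, (Mhat ℓ).Nonempty)
    (εn : ℝ) (hεn : 0 ≤ εn)
    (hedist : ∀ ℓ, EMetric.hausdorffEdist (M ℓ) (Mhat ℓ) ≠ ⊤)
    (hhaus : ∀ ℓ, hausdorffDist (M ℓ) (Mhat ℓ) ≤ εn)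
    (γ : ℝ) (hγ0 : 0 < γ) (hγ1 : γ < 1)
    (P : EuclideanSpace ℝ (Fin D) → Fin L → ℝ)
    (hmargin : ∀ x, ∀ i j : Fin L, i ≠ j →
        infDist x (M i) / infDist x (M j) < 1 - γ → P x j < P x i)
    (hstar : EuclideanSpace ℝ (Fin D) → Fin L)
    (hstar_opt : ∀ x ℓ, P x ℓ ≤ P x (hstar x))
    (h htilde : EuclideanSpace ℝ (Fin D) → Fin L)
    (htilde_ne : ∀ x, htilde x ≠ h x)
    (htilde_min : ∀ x, ∀ ℓ : Fin L, ℓ ≠ h x →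
        infDist x (Mhat (htilde x)) ≤ infDist x (Mhat ℓ))
    (ξ : EuclideanSpace ℝ (Fin D) → ℝ)
    (hξ : ∀ x, ξ x = infDist x (Mhat (htilde x)) / infDist x (Mhat (h x)))
    (x : EuclideanSpace ℝ (Fin D))
    (ha : 0 < infDist x (M (h x)))
    (hahat : 0 < infDist x (Mhat (h x)))
    (hlow : ξ x < 1 - γ - (εn / (infDist x (M (h x)) + εn)) *
        (infDist x (M (htilde x)) / infDist x (M (h x)) + 1)) :
    infDist x (M (htilde x)) / infDist x (M (h x)) < 1 - γ ∧ h x ≠ hstar x :=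
  low_trust_score_implies_disagreement_general D L M Mhat εn hεn hedist hhaus γ P hmargin hstar
    hstar_opt h htilde htilde_ne ξ hξ x ha hahat hlow
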